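/- Let f ∈ F[X] and x ∈ F with f'(x) ≠ 0, and let y ∈ F with γ(f,x)·|x-y| < 1. Then for every k ≥ 2, |f^{(k)}(y)/(k! f'(x))| ≤ γ(f,x)^{k-1}. -/

import Mathlib

open Polynomial Filter

noncomputable def sbeta {F : Type*} [NormedField F] (f : F[X]) (x : F) : ℝ :=
  ‖f.eval x / f.derivative.eval x‖

noncomputable def sgamma {F : Type*} [NormedField F] (f : F[X]) (x : F) : ℝ :=
  ⨆ k : ℕ,
    ‖((⇑(derivative (R := F)))^[k + 2] f).eval x /
        (((k + 2).factorial : F) * f.derivative.eval x)‖ ^ ((1 : ℝ) / (k + 1))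

noncomputable def salpha {F : Type*} [NormedField F] (f : F[X]) (x : F) : ℝ :=
  sbeta f x * sgamma f x

noncomputable def newton {F : Type*} [NormedField F] (f : F[X]) (x : F) : F :=
  x - f.eval x / f.derivative.eval x

section aux
variable {F : Type*} [NormedField F]

lemma sgamma_nonneg (f : F[X]) (x : F) : 0 ≤ sgamma f x :=
  Real.iSup_nonneg fun _ => Real.rpow_nonneg (norm_nonneg _) _

lemma sgamma_bdd (f : F[X]) (x : F) :
    BddAbove (Set.range fun k : ℕ =>
      ‖((⇑(derivative (R := F)))^[k + 2] f).eval x /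
        (((k + 2).factorial : F) * f.derivative.eval x)‖ ^ ((1 : ℝ) / (k + 1))) := by
  set g := fun k : ℕ =>
      ‖((⇑(derivative (R := F)))^[k + 2] f).eval x /
        (((k + 2).factorial : F) * f.derivative.eval x)‖ ^ ((1 : ℝ) / (k + 1)) with hg
  apply Set.Finite.bddAbove
  have hsub : Set.range g ⊆ insert 0 (g '' Set.Iic f.natDegree) := by
    rintro _ ⟨k, rfl⟩
    by_cases hk : k ≤ f.natDegree
    · exact Set.mem_insert_iff.mpr (Or.inr ⟨k, hk, rfl⟩)
    · left
      have hz : (⇑(derivative (R := F)))^[k + 2] f = 0 :=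
        iterate_derivative_eq_zero (by omega)
      have hkne : ((1 : ℝ) / (k + 1)) ≠ 0 := by positivity
      simp only [hg, hz, eval_zero, zero_div, norm_zero, Real.zero_rpow hkne]
  exact Set.Finite.subset (((Set.finite_Iic _).image g).insert 0) hsub

lemma sgamma_le (f : F[X]) (x : F) (m : ℕ) (hm : 2 ≤ m) :
    ‖((⇑(derivative (R := F)))^[m] f).eval x /
        ((m.factorial : F) * f.derivative.eval x)‖ ≤ sgamma f x ^ (m - 1) := by
  obtain ⟨n, rfl⟩ : ∃ n, m = n + 2 := ⟨m - 2, by omega⟩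
  set a := ‖((⇑(derivative (R := F)))^[n + 2] f).eval x /
        (((n + 2).factorial : F) * f.derivative.eval x)‖ with ha
  have h1 : a ^ ((1 : ℝ) / (n + 1)) ≤ sgamma f x := le_ciSup (sgamma_bdd f x) n
  have ha0 : 0 ≤ a := norm_nonneg _
  have hne : ((n : ℝ) + 1) ≠ 0 := by positivity
  have key : (a ^ ((1 : ℝ) / (n + 1))) ^ (n + 1) = a := by
    rw [← Real.rpow_natCast (a ^ ((1 : ℝ) / (n + 1))) (n + 1), ← Real.rpow_mul ha0]
    push_cast
    rw [one_div, inv_mul_cancel₀ hne, Real.rpow_one]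
  calc a = (a ^ ((1 : ℝ) / (n + 1))) ^ (n + 1) := key.symm
    _ ≤ sgamma f x ^ (n + 1) := pow_le_pow_left₀ (Real.rpow_nonneg ha0 _) h1 _
    _ = sgamma f x ^ (n + 2 - 1) := rfl

end aux

/-- If `γ(f,x)·|x-y| < 1` then for every `k ≥ 2`,
`|f^{(k)}(y)/(k! f'(x))| ≤ γ(f,x)^{k-1}`. -/
theorem ultrametric_mixed_gamma_bound
    {F : Type*} [NormedField F] [IsUltrametricDist F] [CompleteSpace F] [CharZero F]
    (f : F[X]) (x y : F) (hx : f.derivative.eval x ≠ 0)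
    (h : sgamma f x * ‖x - y‖ < 1) :
    ∀ k : ℕ, 2 ≤ k →
      ‖((⇑(derivative (R := F)))^[k] f).eval y / ((k.factorial : F) * f.derivative.eval x)‖ ≤
        sgamma f x ^ (k - 1) := by
  intro k hk
  set γ := sgamma f x with hγ
  have hγ0 : 0 ≤ γ := sgamma_nonneg f x
  have hγy : 0 ≤ γ * ‖x - y‖ := mul_nonneg hγ0 (norm_nonneg _)
  set g := (⇑(derivative (R := F)))^[k] f with hgdef
  -- Taylor expansion of g at x evaluated at y
  have hgy : g.eval y = ∑ i ∈ Finset.range (g.natDegree + 1),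
      ((⇑(derivative (R := F)))^[k + i] f).eval x / (i.factorial : F) * (y - x) ^ i := by
    rw [← taylor_eval_sub x g, eval_eq_sum_range' (by rw [natDegree_taylor]; exact lt_add_one _)]
    refine Finset.sum_congr rfl fun i _ => ?_
    congr 1
    rw [taylor_coeff]
    have hsm : (i.factorial • hasseDeriv i g) = (⇑(derivative (R := F)))^[i] g := by
      rw [← factorial_smul_hasseDeriv (R := F) i]
      rfl
    have : (i.factorial : F) * (hasseDeriv i g).eval x
        = ((⇑(derivative (R := F)))^[i] g).eval x := by
      rw [← hsm]
      simp [nsmul_eq_mul]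
    have hfac : (i.factorial : F) ≠ 0 := Nat.cast_ne_zero.mpr i.factorial_ne_zero
    have hcomp : (⇑(derivative (R := F)))^[i] g = (⇑(derivative (R := F)))^[k + i] f := by
      rw [hgdef, ← Function.iterate_add_apply, add_comm]
    rw [hcomp] at this
    field_simp [← this]
    linear_combination this
  rw [hgy, Finset.sum_div]
  apply IsUltrametricDist.norm_sum_le_of_forall_le_of_nonneg (by positivity)
  intro i _
  have hfaci : (i.factorial : F) ≠ 0 := Nat.cast_ne_zero.mpr i.factorial_ne_zero
  have hfack : (k.factorial : F) ≠ 0 := Nat.cast_ne_zero.mpr k.factorial_ne_zero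
  have hfacki : ((k + i).factorial : F) ≠ 0 := Nat.cast_ne_zero.mpr (k + i).factorial_ne_zero
  have hnat : (((k + i).choose i : F)) * (i.factorial : F) * (k.factorial : F)
      = ((k + i).factorial : F) := by
    rw [add_comm k i, Nat.choose_symm_add]
    exact_mod_cast congrArg (Nat.cast (R := F))
      (Nat.add_choose_mul_factorial_mul_factorial i k)
  have hsplit : ((⇑(derivative (R := F)))^[k + i] f).eval x / (i.factorial : F) * (y - x) ^ i
        / ((k.factorial : F) * f.derivative.eval x)
      = (((k + i).choose i : F)) *
        (((⇑(derivative (R := F)))^[k + i] f).eval x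
          / (((k + i).factorial : F) * f.derivative.eval x)) * (y - x) ^ i := by
    have hchoose : (((k + i).choose i : F)) ≠ 0 :=
      Nat.cast_ne_zero.mpr (Nat.choose_pos (Nat.le_add_left i k)).ne'
    rw [← hnat]
    field_simp
  rw [hsplit]
  have hA : ‖((⇑(derivative (R := F)))^[k + i] f).eval x
      / (((k + i).factorial : F) * f.derivative.eval x)‖ ≤ γ ^ (k + i - 1) :=
    sgamma_le f x (k + i) (by omega)
  have hc : ‖(((k + i).choose i : F))‖ ≤ 1 := IsUltrametricDist.norm_natCast_le_one F _
  calc ‖(((k + i).choose i : F)) *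
        (((⇑(derivative (R := F)))^[k + i] f).eval x
          / (((k + i).factorial : F) * f.derivative.eval x)) * (y - x) ^ i‖
      = ‖(((k + i).choose i : F))‖ *
        ‖((⇑(derivative (R := F)))^[k + i] f).eval x
          / (((k + i).factorial : F) * f.derivative.eval x)‖ * ‖y - x‖ ^ i := by
        rw [norm_mul, norm_mul, norm_pow]
    _ ≤ 1 * γ ^ (k + i - 1) * ‖y - x‖ ^ i := by
        gcongr
    _ = γ ^ (k - 1) * (γ * ‖x - y‖) ^ i := by
        rw [one_mul, mul_pow, norm_sub_rev, show k + i - 1 = (k - 1) + i by omega, pow_add]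
        ring
    _ ≤ γ ^ (k - 1) * 1 := by
        gcongr
        exact pow_le_one₀ hγy h.le
    _ = γ ^ (k - 1) := mul_one _
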